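/- Fix real numbers Q_tol ∈ (0, 1), Q_z ∈ [0, 1], ε_c > 0, and ε_s > ε > 0 with Q_tol < 1 strictly. Define h₂(x) := -x·log₂(x) - (1-x)·log₂(1-x), and for each natural number L ≥ 4 set p_L := L^{-1/2}, m_L := p_L·L, k_L := (1-p_L)·L, μ_L := √( ((m_L + k_L)/(m_L·k_L)) · ((m_L + 1)/m_L) · ln(2/(ε_s - ε)) ), and r_L := (1-p_L)·[1 - h₂(Q_tol + μ_L) - h₂(Q_z)] - h₂(p_L) + (1/L)·(log₂(ε²·ε_c) - 2). Then r_L converges to 1 - h₂(Q_tol) - h₂(Q_z) as L → ∞. -/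

import Mathlib

/-!
Every term of the finite key rate is a continuous function of quantities with known limits:
`p_L → 0`, `1/L → 0`, and both sample sizes `m_L = √L` and `k_L = L - √L` tend to infinity,
which forces `μ_L² = (1/m_L + 1/k_L)(1 + 1/m_L) · ln(2/(ε_s - ε)) → 0`. Since `h₂` is continuous
on all of `ℝ` with `h₂(0) = 0`, the key rate tends to `1 - h₂(Q_tol) - h₂(Q_z)`.
-/

/-- The binary entropy function `h₂(x) = -x·log₂(x) - (1-x)·log₂(1-x)`. -/
noncomputable def binEnt (x : ℝ) : ℝ :=
  -x * Real.logb 2 x - (1 - x) * Real.logb 2 (1 - x)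

open Filter Topology Real

lemma binEnt_eq_negMulLog (x : ℝ) : binEnt x = (negMulLog x + negMulLog (1 - x)) / log 2 := by
  simp only [binEnt, negMulLog, logb]
  ring

lemma continuous_binEnt : Continuous binEnt := by
  rw [funext binEnt_eq_negMulLog]
  fun_prop

lemma binEnt_zero : binEnt 0 = 0 := by
  simp [binEnt]

lemma tendsto_rpow_neg_mul_self_atTop {a : ℝ} (ha : a < 1) :
    Tendsto (fun x : ℝ => x ^ (-a) * x) atTop atTop := by
  refine (tendsto_rpow_atTop (by linarith : 0 < -a + 1)).congr' ?_
  filter_upwards [eventually_gt_atTop 0] with x hx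
  exact rpow_add_one hx.ne' (-a)

lemma tendsto_sqrt_statCorrection {ι : Type*} {l : Filter ι} {m k : ι → ℝ}
    (hm : Tendsto m l atTop) (hk : Tendsto k l atTop) (C : ℝ) :
    Tendsto (fun i => √((m i + k i) / (m i * k i) * ((m i + 1) / m i) * C)) l (𝓝 0) := by
  have hsplit : ∀ᶠ i in l, ((m i)⁻¹ + (k i)⁻¹) * (1 + (m i)⁻¹) * C
      = (m i + k i) / (m i * k i) * ((m i + 1) / m i) * C := by
    filter_upwards [hm.eventually_gt_atTop 0, hk.eventually_gt_atTop 0] with i hm0 hk0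
    field_simp
    ring
  have hlim : Tendsto (fun i => ((m i)⁻¹ + (k i)⁻¹) * (1 + (m i)⁻¹) * C) l (𝓝 0) := by
    have hm' := hm.inv_tendsto_atTop
    simpa using ((hm'.add hk.inv_tendsto_atTop).mul (hm'.const_add 1)).mul_const C
  simpa using (hlim.congr' hsplit).sqrt

theorem stmt_2_general (Qtol Qz εc εs ε : ℝ) :
    Filter.Tendsto
      (fun L : ℕ =>
        let p : ℝ := (L : ℝ) ^ (-(1 / 2) : ℝ)
        let m : ℝ := p * (L : ℝ)
        let k : ℝ := (1 - p) * (L : ℝ)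
        let μ : ℝ :=
          Real.sqrt (((m + k) / (m * k)) * ((m + 1) / m) * Real.log (2 / (εs - ε)))
        (1 - p) * (1 - binEnt (Qtol + μ) - binEnt Qz) - binEnt p
          + (1 / (L : ℝ)) * (Real.logb 2 (ε ^ 2 * εc) - 2))
      Filter.atTop (nhds (1 - binEnt Qtol - binEnt Qz)) := by
  set p : ℕ → ℝ := fun L => (L : ℝ) ^ (-(1 / 2) : ℝ)
  have hp : Tendsto p atTop (𝓝 0) :=
    (tendsto_rpow_neg_atTop (by norm_num)).comp tendsto_natCast_atTop_atTop
  have hq : Tendsto (fun L => 1 - p L) atTop (𝓝 1) := by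
    simpa using hp.const_sub 1
  have hm : Tendsto (fun L => p L * L) atTop atTop :=
    (tendsto_rpow_neg_mul_self_atTop (by norm_num)).comp tendsto_natCast_atTop_atTop
  have hk : Tendsto (fun L : ℕ => (1 - p L) * L) atTop atTop :=
    hq.pos_mul_atTop one_pos tendsto_natCast_atTop_atTop
  have hμ := tendsto_sqrt_statCorrection hm hk (log (2 / (εs - ε)))
  have hentμ := (continuous_binEnt.tendsto Qtol).comp (by simpa using hμ.const_add Qtol)
  have hentp : Tendsto (fun L => binEnt (p L)) atTop (𝓝 0) := by
    simpa [binEnt_zero, Function.comp_def] using (continuous_binEnt.tendsto 0).comp hp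
  have hfinite : Tendsto (fun L : ℕ => 1 / (L : ℝ) * (logb 2 (ε ^ 2 * εc) - 2)) atTop (𝓝 0) := by
    simpa using tendsto_one_div_atTop_nhds_zero_nat.mul_const (logb 2 (ε ^ 2 * εc) - 2)
  have hrate := ((hq.mul ((hentμ.const_sub 1).sub_const (binEnt Qz))).sub hentp).add hfinite
  rw [one_mul, sub_zero, add_zero] at hrate
  exact hrate

/-- With the verification fraction `p_L = L^{-1/2}`,
`m_L = p_L·L`, `k_L = (1-p_L)·L`, the statistical correction
`μ_L = √(((m_L+k_L)/(m_L·k_L))·((m_L+1)/m_L)·ln(2/(ε_s-ε)))`, the finite key rate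
`r_L = (1-p_L)·[1 - h₂(Q_tol+μ_L) - h₂(Q_z)] - h₂(p_L) + (1/L)·(log₂(ε²ε_c) - 2)`
converges to the asymptotic key rate `1 - h₂(Q_tol) - h₂(Q_z)` as `L → ∞`. -/
theorem stmt_2 (Qtol Qz εc εs ε : ℝ)
    (hQtol0 : 0 < Qtol) (hQtol1 : Qtol < 1) (hQz0 : 0 ≤ Qz) (hQz1 : Qz ≤ 1)
    (hεc : 0 < εc) (hε : 0 < ε) (hεεs : ε < εs) :
    Filter.Tendsto
      (fun L : ℕ =>
        let p : ℝ := (L : ℝ) ^ (-(1 / 2) : ℝ)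
        let m : ℝ := p * (L : ℝ)
        let k : ℝ := (1 - p) * (L : ℝ)
        let μ : ℝ :=
          Real.sqrt (((m + k) / (m * k)) * ((m + 1) / m) * Real.log (2 / (εs - ε)))
        (1 - p) * (1 - binEnt (Qtol + μ) - binEnt Qz) - binEnt p
          + (1 / (L : ℝ)) * (Real.logb 2 (ε ^ 2 * εc) - 2))
      Filter.atTop (nhds (1 - binEnt Qtol - binEnt Qz)) :=
  stmt_2_general Qtol Qz εc εs ε
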